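/- For every t with |t| ≤ π, |Λ₂(t)| ≤ β + 4γ; in particular |Λ₂(t)| ≤ 0.35. -/

import Mathlib

open Complex

noncomputable section

/-- `e^{a i t}` -/
def expi (a : ℂ) (t : ℝ) : ℂ := Complex.exp (a * Complex.I * (t : ℂ))

/-- `e^{it}` -/
def eit (t : ℝ) : ℂ := expi 1 t

/-- `D̂(t) = (1 − γ + βe^{it})² − 4e^{it}(β − γ(1−α))` -/
def Dhat (α β γ : ℝ) (t : ℝ) : ℂ :=
  (1 - (γ : ℂ) + (β : ℂ) * eit t) ^ 2 - 4 * eit t * ((β : ℂ) - (γ : ℂ) * (1 - (α : ℂ)))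

/-- The square root of `D̂(t)` with positive real part (junk value `0` if none exists). -/
def sqrtD (α β γ : ℝ) (t : ℝ) : ℂ :=
  letI := Classical.propDecidable (∃ s : ℂ, s ^ 2 = Dhat α β γ t ∧ 0 < s.re)
  if h : ∃ s : ℂ, s ^ 2 = Dhat α β γ t ∧ 0 < s.re then h.choose else 0

def Lam1 (α β γ : ℝ) (t : ℝ) : ℂ := (1 - (γ : ℂ) + (β : ℂ) * eit t + sqrtD α β γ t) / 2

def Lam2 (α β γ : ℝ) (t : ℝ) : ℂ := (1 - (γ : ℂ) + (β : ℂ) * eit t - sqrtD α β γ t) / 2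

/-- Common numerator of `Ŵ₁, Ŵ₂, V̂, V̂₁, V̂₂` with `L` in place of `Λ_j` (resp. `Δ̂`). -/
def Wnum (α β γ : ℝ) (d : ℕ) (L : ℂ) (t : ℝ) : ℂ :=
  (expi ((d : ℂ) + 1) t - 1) * ((β : ℂ) - (γ : ℂ) * (1 - (α : ℂ)))
    - (expi (d : ℂ) t - 1) * L
    + (eit t - 1) * ((γ : ℂ) * L - (β : ℂ) + (γ : ℂ) * (1 - (α : ℂ)))

def W1denom (α β γ : ℝ) (d : ℕ) (t : ℝ) : ℂ :=
  (Lam1 α β γ t - expi (d : ℂ) t) * sqrtD α β γ t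

def W2denom (α β γ : ℝ) (d : ℕ) (t : ℝ) : ℂ :=
  -((Lam2 α β γ t - expi (d : ℂ) t) * sqrtD α β γ t)

def W1 (α β γ : ℝ) (d : ℕ) (t : ℝ) : ℂ :=
  Wnum α β γ d (Lam1 α β γ t) t / W1denom α β γ d t

def W2 (α β γ : ℝ) (d : ℕ) (t : ℝ) : ℂ :=
  Wnum α β γ d (Lam2 α β γ t) t / W2denom α β γ d t

def W3denom (α β γ : ℝ) (d : ℕ) (t : ℝ) : ℂ :=
  (expi ((d : ℂ) - 1) t - (β : ℂ)) * (expi (d : ℂ) t - (1 - (γ : ℂ)))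
    - (γ : ℂ) * (1 - (α : ℂ) - (β : ℂ))

def W3 (α β γ : ℝ) (d : ℕ) (t : ℝ) : ℂ :=
  (α : ℂ) * (γ : ℂ) * expi (d : ℂ) t / W3denom α β γ d t

def Hhat (β : ℝ) (t : ℝ) : ℂ := (1 - (β : ℂ)) * eit t / (1 - (β : ℂ) * eit t)

def Psihat (α β : ℝ) (t : ℝ) : ℂ :=
  (1 - (α : ℂ) - (β : ℂ)) * eit t / (1 - (β : ℂ) * eit t)

def A1 (α β γ : ℝ) (t : ℝ) : ℂ :=
  (1 - (β : ℂ)) * (Psihat α β t - 1) / (1 + (γ : ℂ) - (β : ℂ))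

def A2 (α β γ : ℝ) (t : ℝ) : ℂ :=
  -((β : ℂ) * (1 - (β : ℂ)) * (Hhat β t - 1) * (Psihat α β t - 1)) / (1 + (γ : ℂ) - (β : ℂ)) ^ 2

def A3 (α β γ : ℝ) (t : ℝ) : ℂ :=
  (β : ℂ) ^ 2 * (1 - (β : ℂ)) * (Hhat β t - 1) ^ 2 * (Psihat α β t - 1)
    / (1 + (γ : ℂ) - (β : ℂ)) ^ 3

def A4 (α β γ : ℝ) (t : ℝ) : ℂ :=
  -((1 - (β : ℂ)) ^ 3 * (Psihat α β t - 1) ^ 2)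
    / ((1 + (γ : ℂ) - (β : ℂ)) ^ 3 * (1 - (β : ℂ) * eit t))

def A5 (α β γ : ℝ) (t : ℝ) : ℂ :=
  3 * (β : ℂ) * (1 - (β : ℂ)) ^ 3 * (Psihat α β t - 1) ^ 2 * (Hhat β t - 1)
    / ((1 + (γ : ℂ) - (β : ℂ)) ^ 4 * (1 - (β : ℂ) * eit t))

def A6 (α β γ : ℝ) (t : ℝ) : ℂ :=
  2 * (1 - (β : ℂ)) ^ 5 * (Psihat α β t - 1) ^ 3
    / ((1 + (γ : ℂ) - (β : ℂ)) ^ 5 * (1 - (β : ℂ) * eit t) ^ 2)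

def Ahat (α β γ : ℝ) (t : ℝ) : ℂ :=
  1 + A1 α β γ t * (γ : ℂ) + (A2 α β γ t + A4 α β γ t) * (γ : ℂ) ^ 2
    + (A3 α β γ t + A5 α β γ t + A6 α β γ t) * (γ : ℂ) ^ 3

def DeltaHat (α β γ : ℝ) (t : ℝ) : ℂ := 1 + A1 α β γ t * (γ : ℂ)

def Delta1Hat (α β γ : ℝ) (t : ℝ) : ℂ :=
  1 + A1 α β γ t * (γ : ℂ) + (A2 α β γ t + A4 α β γ t) * (γ : ℂ) ^ 2

def Ghat (α β γ : ℝ) (t : ℝ) : ℂ :=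
  Complex.exp (Ahat α β γ t - 1
    - (A1 α β γ t ^ 2 * (γ : ℂ) ^ 2
        + 2 * A1 α β γ t * (A2 α β γ t + A4 α β γ t) * (γ : ℂ) ^ 3) / 2
    + A1 α β γ t ^ 3 * (γ : ℂ) ^ 3 / 3)

def G1hat (α β γ : ℝ) (t : ℝ) : ℂ :=
  Complex.exp (A1 α β γ t * (γ : ℂ)
    + (A2 α β γ t + A4 α β γ t - A1 α β γ t ^ 2 / 2) * (γ : ℂ) ^ 2)

def Vhat (α β γ : ℝ) (d : ℕ) (t : ℝ) : ℂ :=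
  Wnum α β γ d (DeltaHat α β γ t) t /
    ((Ahat α β γ t - expi (d : ℂ) t)
      * (2 * DeltaHat α β γ t - 1 + (γ : ℂ) - (β : ℂ) * eit t))

def V1hat (α β γ : ℝ) (d : ℕ) (t : ℝ) : ℂ :=
  Wnum α β γ d (DeltaHat α β γ t) t /
    ((Delta1Hat α β γ t - expi (d : ℂ) t)
      * (2 * DeltaHat α β γ t - 1 + (γ : ℂ) - (β : ℂ) * eit t))

def V2hat (α β γ : ℝ) (d : ℕ) (t : ℝ) : ℂ :=
  Wnum α β γ d (DeltaHat α β γ t) t /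
    ((Delta1Hat α β γ t - expi (d : ℂ) t)
      * (2 * Delta1Hat α β γ t - 1 + (γ : ℂ) - (β : ℂ) * eit t))

/-- `f(1) = 0, f(2) = 1, f(3) = d` (states indexed `0,1,2`). -/
def fval (d : ℕ) : Fin 3 → ℤ := ![0, 1, (d : ℤ)]

/-- Transition matrix of the Markov chain. -/
def Pmat (α β γ : ℝ) : Fin 3 → Fin 3 → ℝ :=
  ![![1 - γ, γ, 0], ![1 - α - β, β, α], ![0, 0, 1]]

/-- The path `(ξ₀, ξ₁, …, ξ_n)` obtained by prepending the initial (healthy) state. -/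
def path (n : ℕ) (s : Fin n → Fin 3) : Fin (n + 1) → Fin 3 := Fin.cons 0 s

/-- `F_n{m}`: the mass the distribution of `f(ξ₁) + ⋯ + f(ξ_n)` puts on `m`,
for the chain started at the healthy state `0`. -/
def Fmass (α β γ : ℝ) (d n : ℕ) (m : ℤ) : ℝ :=
  ∑ s ∈ Finset.univ.filter (fun s : Fin n → Fin 3 => (∑ k, fval d (s k)) = m),
    ∏ k : Fin n, Pmat α β γ (path n s k.castSucc) (path n s k.succ)

/-- The characteristic function `Σ_{m ∈ ℤ} F_n{m} e^{imt}` of `F_n`. -/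
def charFn (α β γ : ℝ) (d n : ℕ) (t : ℝ) : ℂ :=
  ∑' m : ℤ, (Fmass α β γ d n m : ℂ) * expi (m : ℂ) t

/-- Mass at `k ∈ ℤ` of the signed measure associated with the Fourier transform `Mhat`. -/
def massOf (Mhat : ℝ → ℂ) (k : ℤ) : ℂ :=
  (1 / (2 * Real.pi)) *
    ∫ t in (-Real.pi)..Real.pi, Complex.exp (-(k : ℂ) * Complex.I * (t : ℂ)) * Mhat t

/-- Fourier transform of the signed measure `GⁿV + E`. -/
def approxGnVE (α β γ : ℝ) (d n : ℕ) (t : ℝ) : ℂ :=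
  Ghat α β γ t ^ n * Vhat α β γ d t + expi ((n : ℂ) * (d : ℂ)) t * W3 α β γ d t

/-- Fourier transform of the signed measure `G₁ⁿV₁ + E`. -/
def approxG1nV1E (α β γ : ℝ) (d n : ℕ) (t : ℝ) : ℂ :=
  G1hat α β γ t ^ n * V1hat α β γ d t + expi ((n : ℂ) * (d : ℂ)) t * W3 α β γ d t

/-- Fourier transform of the signed measure `G₁ⁿV₂ + E`. -/
def approxG1nV2E (α β γ : ℝ) (d n : ℕ) (t : ℝ) : ℂ :=
  G1hat α β γ t ^ n * V2hat α β γ d t + expi ((n : ℂ) * (d : ℂ)) t * W3 α β γ d t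

/-- Fourier transform of the signed measure `E`. -/
def approxE (α β γ : ℝ) (d n : ℕ) (t : ℝ) : ℂ :=
  expi ((n : ℂ) * (d : ℂ)) t * W3 α β γ d t

/-- Mass at `k` of the difference `F_n − M`, where `M` has Fourier transform `Mhat`. -/
def diffMass (α β γ : ℝ) (d n : ℕ) (Mhat : ℝ → ℂ) (k : ℤ) : ℂ :=
  (Fmass α β γ d n k : ℂ) - massOf Mhat k

/-- Condition (C) of the paper. -/
def condC (C₀ α β γ : ℝ) : Prop :=
  0 < α ∧ α < 1 ∧ 0 < β ∧ β < 1 ∧ 0 < γ ∧ γ < 1 ∧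
    β ≤ 0.15 ∧ γ ≤ 0.05 ∧ α ≤ C₀ ∧ α + β < 1

/-! Writing `R = 1 − γ − βe^{it}` (`Rhat` below), one has `D̂ = R² + E` with `E = 4γ(1 − α − β)e^{it}` small,
so `√D̂ − R = E / (√D̂ + R)` has norm at most `‖E‖ / Re R ≤ 4γ / 0.8 = 5γ`. Since
`Λ₂ = βe^{it} + (R − √D̂)/2`, this gives `‖Λ₂‖ ≤ β + 5γ/2`. -/

lemma Complex.exists_sq_eq_and_re_pos_of_mem_slitPlane {D : ℂ} (hD : D ∈ slitPlane) :
    ∃ s : ℂ, s ^ 2 = D ∧ 0 < s.re := by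
  refine ⟨D ^ (2⁻¹ : ℂ), by simp, ?_⟩
  rw [cpow_inv_two_re, Real.sqrt_pos]
  rcases mem_slitPlane_iff.1 hD with hre | him
  · linarith [norm_nonneg D]
  · linarith [neg_le_abs D.re, abs_re_lt_norm.2 him]

lemma Complex.norm_sub_le_of_sq_eq_sq_add {s R E : ℂ} (hs : s ^ 2 = R ^ 2 + E)
    (hs_re : 0 < s.re) (hR : 0 < R.re) : ‖s - R‖ ≤ ‖E‖ / R.re := by
  have hR_le : R.re ≤ ‖s + R‖ := by
    calc R.re ≤ (s + R).re := by simp only [add_re]; linarith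
      _ ≤ ‖s + R‖ := re_le_norm _
  have hfac : ‖s - R‖ * ‖s + R‖ = ‖E‖ := by
    rw [← norm_mul]; congr 1; linear_combination hs
  rw [le_div_iff₀ hR, ← hfac]
  exact mul_le_mul_of_nonneg_left hR_le (norm_nonneg _)

lemma norm_eit (t : ℝ) : ‖eit t‖ = 1 := by
  simp [eit, expi, norm_exp]

lemma sqrtD_spec {α β γ t : ℝ} (hD : Dhat α β γ t ∈ slitPlane) :
    sqrtD α β γ t ^ 2 = Dhat α β γ t ∧ 0 < (sqrtD α β γ t).re := by
  have hex := exists_sq_eq_and_re_pos_of_mem_slitPlane hD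
  rw [sqrtD, dif_pos hex]
  exact hex.choose_spec

def Rhat (β γ t : ℝ) : ℂ := 1 - γ - β * eit t

lemma Dhat_eq_Rhat_sq_add (α β γ t : ℝ) :
    Dhat α β γ t = Rhat β γ t ^ 2 + (4 * γ * (1 - α - β) : ℝ) * eit t := by
  rw [Dhat, Rhat]; push_cast; ring

lemma Lam2_eq (α β γ t : ℝ) :
    Lam2 α β γ t = β * eit t - (sqrtD α β γ t - Rhat β γ t) / 2 := by
  rw [Lam2, Rhat]; ring

section condC

variable {C₀ α β γ : ℝ}

lemma le_re_Rhat_of_condC (h : condC C₀ α β γ) (t : ℝ) : 1 - γ - β ≤ (Rhat β γ t).re := by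
  have hre : (eit t).re ≤ 1 := (re_le_norm _).trans (norm_eit t).le
  simp only [Rhat, sub_re, one_re, ofReal_re, re_ofReal_mul]
  nlinarith [h.2.2.1]

lemma abs_im_Rhat_le_of_condC (h : condC C₀ α β γ) (t : ℝ) : |(Rhat β γ t).im| ≤ β := by
  have him : |(eit t).im| ≤ 1 := (abs_im_le_norm _).trans (norm_eit t).le
  simp only [Rhat, sub_im, one_im, ofReal_im, im_ofReal_mul, zero_sub, sub_zero, abs_neg, abs_mul,
    abs_of_pos h.2.2.1]
  nlinarith [h.2.2.1]

lemma norm_Dhat_sub_Rhat_sq_le_of_condC (h : condC C₀ α β γ) (t : ℝ) :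
    ‖((4 * γ * (1 - α - β) : ℝ) : ℂ) * eit t‖ ≤ 4 * γ := by
  obtain ⟨hα, -, hβ, -, hγ, -, -, -, -, hαβ⟩ := h
  rw [norm_mul, norm_eit, mul_one, norm_real, Real.norm_eq_abs, abs_le]
  constructor <;> nlinarith

lemma Dhat_mem_slitPlane_of_condC (h : condC C₀ α β γ) (t : ℝ) : Dhat α β γ t ∈ slitPlane := by
  have hR_re := le_re_Rhat_of_condC h t
  have hR_im := abs_le.1 (abs_im_Rhat_le_of_condC h t)
  have hE_re := abs_le.1 ((abs_re_le_norm _).trans (norm_Dhat_sub_Rhat_sq_le_of_condC h t))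
  obtain ⟨-, -, hβ0, -, -, -, hβ, hγ, -, -⟩ := h
  refine mem_slitPlane_iff.2 (Or.inl ?_)
  rw [Dhat_eq_Rhat_sq_add, add_re, sq, mul_re]
  nlinarith

lemma norm_sqrtD_sub_Rhat_le_of_condC (h : condC C₀ α β γ) (t : ℝ) :
    ‖sqrtD α β γ t - Rhat β γ t‖ ≤ 5 * γ := by
  obtain ⟨hsq, hs_re⟩ := sqrtD_spec (Dhat_mem_slitPlane_of_condC h t)
  have hR_re := le_re_Rhat_of_condC h t
  have hE := norm_Dhat_sub_Rhat_sq_le_of_condC h t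
  obtain ⟨-, -, -, -, hγ0, -, hβ, hγ, -, -⟩ := h
  rw [Dhat_eq_Rhat_sq_add] at hsq
  calc _ ≤ _ / _ := norm_sub_le_of_sq_eq_sq_add hsq hs_re (by linarith)
    _ ≤ 4 * γ / 0.8 := by gcongr; linarith
    _ = 5 * γ := by ring

end condC

theorem stmt2_general (C₀ : ℝ)
    (α β γ : ℝ) (h : condC C₀ α β γ) (t : ℝ) :
    ‖Lam2 α β γ t‖ ≤ β + 4 * γ ∧ ‖Lam2 α β γ t‖ ≤ 0.35 := by
  have hdiff := norm_sqrtD_sub_Rhat_le_of_condC h t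
  obtain ⟨-, -, hβ0, -, hγ0, -, hβ, hγ, -, -⟩ := h
  have hmain : ‖Lam2 α β γ t‖ ≤ β + 4 * γ := by
    rw [Lam2_eq]
    calc _ ≤ ‖(β : ℂ) * eit t‖ + ‖sqrtD α β γ t - Rhat β γ t‖ / 2 := by
          refine (norm_sub_le _ _).trans_eq ?_
          rw [norm_div, RCLike.norm_ofNat]
      _ ≤ β + 5 * γ / 2 := by
          rw [norm_mul, norm_eit, mul_one, norm_real, Real.norm_of_nonneg hβ0.le]
          linarith
      _ ≤ β + 4 * γ := by linarith
  exact ⟨hmain, by linarith⟩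

/-- `|Λ₂(t)| ≤ β + 4γ ≤ 0.35`. -/
theorem stmt2 (C₀ : ℝ) (hC₀ : C₀ ∈ Set.Ioo (0 : ℝ) 1)
    (α β γ : ℝ) (h : condC C₀ α β γ) (t : ℝ) (ht : |t| ≤ Real.pi) :
    ‖Lam2 α β γ t‖ ≤ β + 4 * γ ∧ ‖Lam2 α β γ t‖ ≤ 0.35 :=
  stmt2_general C₀ α β γ h t
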